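/- arXiv:1512.02549 — 2 statements merged into one kernel-verified Lean document; each statement's English description precedes it below -/
import Mathlib

section
/- For the cone S^n_+ of n×n symmetric positive semidefinite matrices, the distance to polyhedrality is n − 1: the longest strictly ascending chain of nonempty faces F_1 ⊊ ... ⊊ F_ℓ with F_1 polyhedral and F_j nonpolyhedral for j > 1 has length n. -/
/-- A face of a convex cone (in the space of `n × n` real matrices). -/
def IsFace {n : ℕ} (K F : Set (Matrix (Fin n) (Fin n) ℝ)) : Prop :=
  F ⊆ K ∧ Convex ℝ F ∧ (∀ x ∈ F, ∀ t : ℝ, 0 ≤ t → t • x ∈ F) ∧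
    ∀ x ∈ K, ∀ y ∈ K, x + y ∈ F → x ∈ F ∧ y ∈ F

/-- A polyhedral cone: a finite intersection of half-spaces given by linear functionals. -/
def IsPolyhedralCone {n : ℕ} (K : Set (Matrix (Fin n) (Fin n) ℝ)) : Prop :=
  ∃ s : Finset (Matrix (Fin n) (Fin n) ℝ →ₗ[ℝ] ℝ), K = {x | ∀ f ∈ s, 0 ≤ f x}

/-- A strictly ascending chain of nonempty faces of `K`. -/
def IsFaceChain {n : ℕ} (K : Set (Matrix (Fin n) (Fin n) ℝ)) (ℓ : ℕ)
    (F : Fin ℓ → Set (Matrix (Fin n) (Fin n) ℝ)) : Prop :=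
  StrictMono F ∧ ∀ i, IsFace K (F i) ∧ (F i).Nonempty

/-- A chain witnessing the distance to polyhedrality: first face polyhedral,
subsequent faces nonpolyhedral. -/
def IsPolyChain {n : ℕ} (K : Set (Matrix (Fin n) (Fin n) ℝ)) (ℓ : ℕ)
    (F : Fin ℓ → Set (Matrix (Fin n) (Fin n) ℝ)) : Prop :=
  IsFaceChain K ℓ F ∧ (∀ i : Fin ℓ, i.val = 0 → IsPolyhedralCone (F i)) ∧
    (∀ i : Fin ℓ, 0 < i.val → ¬ IsPolyhedralCone (F i))

/-!
A face `F` of `S^n_+` is determined by the subspace `V F = {v | v vᵀ ∈ F}`: every positive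
semidefinite matrix is a sum of rank-one matrices `v vᵀ`, and a face contains every summand of each
of its elements. So along a strictly ascending chain of faces `dim (V F)` strictly increases, and a
face with `dim (V F) ≤ 1` is a ray, hence polyhedral; after the first face of a polyhedral chain all
these dimensions lie in `[2, n]`, so the chain has length at most `n`.

Conversely, the faces of matrices supported on the leading `k × k` block, `k = 1, …, n`, form such
a chain. For `k ≥ 2` the face contains the parabola `X t = (e₀ + t e₁)(e₀ + t e₁)ᵀ`. Each
constraint `f ≥ 0` of a would-be polyhedral description is a quadratic polynomial in `t` along it,
so at a generic `t` the active constraints vanish on the whole parabola and the cone would contain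
`X t - ε w wᵀ` for small `ε > 0` and `w ⊥ e₀ + t e₁`, a matrix that is not positive semidefinite.
-/

open Matrix Filter Topology

lemma isPolyhedralCone_setOf_eq_zero_and_nonneg {n : ℕ} {ι κ : Type*} [Fintype ι] [Fintype κ]
    (f : ι → Matrix (Fin n) (Fin n) ℝ →ₗ[ℝ] ℝ) (g : κ → Matrix (Fin n) (Fin n) ℝ →ₗ[ℝ] ℝ) :
    IsPolyhedralCone {X | (∀ i, f i X = 0) ∧ ∀ k, 0 ≤ g k X} := by
  classical
  refine ⟨Finset.univ.image f ∪ Finset.univ.image (-f ·) ∪ Finset.univ.image g, ?_⟩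
  ext X
  simp only [Set.mem_ofPred_eq, Finset.mem_union, Finset.mem_image, Finset.mem_univ, true_and]
  constructor
  · rintro ⟨hf, hg⟩ _ ((⟨i, rfl⟩ | ⟨i, rfl⟩) | ⟨k, rfl⟩)
    · exact (hf i).ge
    · simp [hf i]
    · exact hg k
  · intro h
    refine ⟨fun i => le_antisymm ?_ (h _ (.inl (.inl ⟨i, rfl⟩))), fun k => h _ (.inr ⟨k, rfl⟩)⟩
    simpa using h _ (.inl (.inr ⟨i, rfl⟩))

lemma isPolyhedralCone_ray {n : ℕ} (A : Matrix (Fin n) (Fin n) ℝ) :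
    IsPolyhedralCone ((· • A) '' Set.Ici (0 : ℝ)) := by
  by_cases hA : A = 0
  · convert isPolyhedralCone_setOf_eq_zero_and_nonneg
      (fun ij : Fin n × Fin n => entryLinearMap ℝ ℝ ij.1 ij.2) (Empty.elim : Empty → _) using 1
    ext X
    simp [hA, Set.Nonempty.image_const Set.nonempty_Ici, ← Matrix.ext_iff]
  obtain ⟨p, q, hpq⟩ : ∃ p q, A p q ≠ 0 := by
    by_contra! h
    exact hA (Matrix.ext h)
  convert isPolyhedralCone_setOf_eq_zero_and_nonneg
    (fun ij : Fin n × Fin n =>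
      A p q • entryLinearMap ℝ ℝ ij.1 ij.2 - A ij.1 ij.2 • entryLinearMap ℝ ℝ p q)
    (fun _ : Unit => A p q • entryLinearMap ℝ ℝ p q) using 1
  ext X
  simp only [Set.mem_image, Set.mem_Ici, Set.mem_ofPred_eq, LinearMap.sub_apply,
    LinearMap.smul_apply, entryLinearMap_apply, smul_eq_mul, Prod.forall, forall_const]
  constructor
  · rintro ⟨c, hc, rfl⟩
    simp only [Matrix.smul_apply, smul_eq_mul]
    exact ⟨fun i j => by ring, by nlinarith [mul_self_nonneg (A p q)]⟩
  · rintro ⟨hX, hXpq⟩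
    refine ⟨X p q / A p q, ?_, ?_⟩
    · have hcoeff : X p q / A p q = A p q * X p q / A p q ^ 2 := by field_simp
      rw [hcoeff]
      positivity
    · ext i j
      have := hX i j
      simp only [Matrix.smul_apply, smul_eq_mul]
      field_simp
      linarith

lemma eventually_forall_nonneg_add_smul {E : Type*} [AddCommGroup E] [Module ℝ E]
    (s : Finset (E →ₗ[ℝ] ℝ)) {x y : E} (hx : ∀ f ∈ s, 0 ≤ f x)
    (hy : ∀ f ∈ s, f x = 0 → 0 ≤ f y) :
    ∀ᶠ ε in 𝓝[>] (0 : ℝ), ∀ f ∈ s, 0 ≤ f (x + ε • y) := by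
  rw [Finset.eventually_all]
  intro f hf
  simp only [map_add, map_smul, smul_eq_mul]
  rcases (hx f hf).eq_or_lt with hfx | hfx
  · filter_upwards [self_mem_nhdsWithin] with ε (hε : 0 < ε)
    rw [← hfx, zero_add]
    exact mul_nonneg hε.le (hy f hf hfx.symm)
  · have hcont : ContinuousAt (fun ε : ℝ => f x + ε * f y) 0 := by fun_prop
    have := hcont.tendsto.eventually_const_lt (by simpa using hfx)
    exact (eventually_nhdsWithin_of_eventually_nhds this).mono fun _ => le_of_lt

open Polynomial in
lemma exists_forall_quadratic_eq_zero_imp_eq_zero {ι : Type*} (s : Finset ι)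
    (a b c : ι → ℝ) :
    ∃ t : ℝ, ∀ i ∈ s, a i + b i * t + c i * t ^ 2 = 0 → a i = 0 ∧ b i = 0 ∧ c i = 0 := by
  let q i : ℝ[X] := C (a i) + C (b i) * X + C (c i) * X ^ 2
  have hfin : (⋃ i ∈ s, {t | q i ≠ 0 ∧ (q i).IsRoot t}).Finite :=
    s.finite_toSet.biUnion fun i _ => by
      by_cases hq : q i = 0
      · simp [hq]
      · exact (finite_setOfPred_isRoot hq).subset fun t ht => ht.2
  obtain ⟨t, ht⟩ := hfin.exists_notMem
  refine ⟨t, fun i hi hroot => ?_⟩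
  have hq : q i = 0 := by
    by_contra hq
    exact ht (Set.mem_biUnion hi ⟨hq, by simpa [q] using hroot⟩)
  refine ⟨?_, ?_, ?_⟩
  · simpa [q] using congrArg (coeff · 0) hq
  · simpa [q] using congrArg (coeff · 1) hq
  · simpa [q] using congrArg (coeff · 2) hq

lemma dotProduct_vecMulVec_self_mulVec {m : Type*} [Fintype m] (p w : m → ℝ) :
    w ⬝ᵥ vecMulVec p p *ᵥ w = (p ⬝ᵥ w) ^ 2 := by
  simp [vecMulVec_mulVec, dotProduct_comm w p, sq]

lemma not_posSemidef_vecMulVec_add_smul_neg {m : Type*} [Fintype m] {p w : m → ℝ}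
    (hpw : p ⬝ᵥ w = 0) (hw : w ≠ 0) {ε : ℝ} (hε : 0 < ε) :
    ¬ (vecMulVec p p + ε • -vecMulVec w w).PosSemidef := by
  intro h
  have hq := h.dotProduct_mulVec_nonneg w
  rw [star_trivial, add_mulVec, dotProduct_add, smul_mulVec, dotProduct_smul, neg_mulVec,
    dotProduct_neg, dotProduct_vecMulVec_self_mulVec, dotProduct_vecMulVec_self_mulVec, hpw,
    smul_eq_mul] at hq
  have hww : w ⬝ᵥ w ≠ 0 := mt dotProduct_self_eq_zero.mp hw
  have : 0 < ε * (w ⬝ᵥ w) ^ 2 := by positivity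
  linarith

theorem not_isPolyhedralCone_of_forall_vecMulVec_mem {n : ℕ}
    {F : Set (Matrix (Fin n) (Fin n) ℝ)} (hF : F ⊆ {A | A.PosSemidef}) {u v : Fin n → ℝ}
    (hu : u ⬝ᵥ u = 1) (hv : v ⬝ᵥ v = 1) (huv : u ⬝ᵥ v = 0)
    (hmem : ∀ t : ℝ, vecMulVec (u + t • v) (u + t • v) ∈ F) :
    ¬ IsPolyhedralCone F := by
  rintro ⟨s, rfl⟩
  set A := vecMulVec u u
  set B := vecMulVec u v + vecMulVec v u
  set C := vecMulVec v v
  have hX (t : ℝ) : vecMulVec (u + t • v) (u + t • v) = A + t • B + t ^ 2 • C := by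
    ext i j
    simp only [A, B, C, vecMulVec_apply, Matrix.add_apply, Matrix.smul_apply, Pi.add_apply,
      Pi.smul_apply, smul_eq_mul]
    ring
  obtain ⟨t, ht⟩ := exists_forall_quadratic_eq_zero_imp_eq_zero s (· A) (· B) (· C)
  set w := v - t • u
  have hw : vecMulVec w w = t ^ 2 • A - t • B + C := by
    ext i j
    simp only [w, A, B, C, vecMulVec_apply, Matrix.add_apply, Matrix.sub_apply,
      Matrix.smul_apply, Pi.sub_apply, Pi.smul_apply, smul_eq_mul]
    ring
  have hactive : ∀ f ∈ s, f (vecMulVec (u + t • v) (u + t • v)) = 0 →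
      0 ≤ f (-vecMulVec w w) := by
    intro f hf hf0
    rw [hX] at hf0
    simp only [map_add, map_smul, smul_eq_mul] at hf0
    obtain ⟨hA, hB, hC⟩ := ht f hf (by linarith)
    simp [hw, hA, hB, hC]
  obtain ⟨ε, hεmem, hε⟩ := ((eventually_forall_nonneg_add_smul s (hmem t) hactive).and
    self_mem_nhdsWithin).exists
  have huw : (u + t • v) ⬝ᵥ w = 0 := by
    simp only [w, add_dotProduct, dotProduct_sub, smul_dotProduct, dotProduct_smul, hu, hv, huv,
      dotProduct_comm v u, smul_eq_mul]
    ring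
  have hw0 : w ≠ 0 := by
    intro h
    have hvw := congrArg (v ⬝ᵥ ·) h
    simp only [w, dotProduct_sub, dotProduct_smul, hv, dotProduct_comm v u, huv, smul_eq_mul,
      dotProduct_zero] at hvw
    norm_num at hvw
  exact not_posSemidef_vecMulVec_add_smul_neg huw hw0 hε (hF hεmem)

lemma Matrix.PosSemidef.exists_eq_sum_vecMulVec {m : Type*} [Fintype m] [DecidableEq m]
    {X : Matrix m m ℝ} (hX : X.PosSemidef) :
    ∃ B : Matrix m m ℝ, X = ∑ k, vecMulVec (B k) (B k) := by
  open scoped MatrixOrder in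
  obtain ⟨B, rfl⟩ := CStarAlgebra.nonneg_iff_eq_star_mul_self.mp hX.nonneg
  refine ⟨B, ?_⟩
  ext i j
  simp [Matrix.mul_apply, Matrix.sum_apply, vecMulVec_apply]

namespace IsFace

variable {n : ℕ} {K F G : Set (Matrix (Fin n) (Fin n) ℝ)}

lemma zero_mem (hF : IsFace K F) (hne : F.Nonempty) : 0 ∈ F := by
  obtain ⟨x, hx⟩ := hne
  simpa using hF.2.2.1 x hx 0 le_rfl

lemma add_mem (hF : IsFace K F) {x y : Matrix (Fin n) (Fin n) ℝ} (hx : x ∈ F) (hy : y ∈ F) :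
    x + y ∈ F := by
  have hmid := hF.2.1 hx hy (by norm_num : (0 : ℝ) ≤ 1 / 2) (by norm_num : (0 : ℝ) ≤ 1 / 2)
    (by norm_num)
  convert hF.2.2.1 _ hmid 2 zero_le_two using 1
  module

lemma sum_mem (hF : IsFace K F) (hne : F.Nonempty) {ι : Type*} {s : Finset ι}
    {g : ι → Matrix (Fin n) (Fin n) ℝ} (hg : ∀ i ∈ s, g i ∈ F) : ∑ i ∈ s, g i ∈ F :=
  Finset.sum_induction g (· ∈ F) (fun _ _ => hF.add_mem) (hF.zero_mem hne) hg

lemma mem_of_sum_mem (hF : IsFace {A | A.PosSemidef} F) {ι : Type*} {s : Finset ι}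
    {g : ι → Matrix (Fin n) (Fin n) ℝ} (hg : ∀ i ∈ s, (g i).PosSemidef)
    (hsum : ∑ i ∈ s, g i ∈ F) : ∀ i ∈ s, g i ∈ F := by
  classical
  induction s using Finset.induction_on with
  | empty => simp
  | insert a s ha ih =>
    rw [Finset.sum_insert ha] at hsum
    obtain ⟨hga, hgs⟩ := hF.2.2.2 _ (hg a (s.mem_insert_self a)) _
      (posSemidef_sum s fun i hi => hg i (Finset.mem_insert_of_mem hi)) hsum
    rw [Finset.forall_mem_insert]
    exact ⟨hga, ih (fun i hi => hg i (Finset.mem_insert_of_mem hi)) hgs⟩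

lemma vecMulVec_add_mem (hF : IsFace {A | A.PosSemidef} F) {v w : Fin n → ℝ}
    (hv : vecMulVec v v ∈ F) (hw : vecMulVec w w ∈ F) : vecMulVec (v + w) (v + w) ∈ F := by
  have hpar : vecMulVec (v + w) (v + w) + vecMulVec (v - w) (v - w) =
      (2 : ℝ) • vecMulVec v v + (2 : ℝ) • vecMulVec w w := by
    ext i j
    simp only [vecMulVec_apply, Matrix.add_apply, Matrix.smul_apply, Pi.add_apply,
      Pi.sub_apply, smul_eq_mul]
    ring
  have hsum := hF.add_mem (hF.2.2.1 _ hv 2 zero_le_two) (hF.2.2.1 _ hw 2 zero_le_two)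
  rw [← hpar] at hsum
  exact (hF.2.2.2 _ (posSemidef_vecMulVec_self_star _) _
    (posSemidef_vecMulVec_self_star _) hsum).1

/-- The subspace `V` with `F = {X ⪰ 0 | range X ⊆ V}`. -/
def subspace (hF : IsFace {A | A.PosSemidef} F) (hne : F.Nonempty) :
    Submodule ℝ (Fin n → ℝ) where
  carrier := {v | vecMulVec v v ∈ F}
  zero_mem' := by simpa using hF.zero_mem hne
  add_mem' := hF.vecMulVec_add_mem
  smul_mem' c v hv := by
    have hc : vecMulVec (c • v) (c • v) = (c * c) • vecMulVec v v := by
      ext i j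
      simp only [vecMulVec_apply, Matrix.smul_apply, Pi.smul_apply, smul_eq_mul]
      ring
    simpa [hc] using hF.2.2.1 _ hv (c * c) (mul_self_nonneg c)

lemma mem_subspace (hF : IsFace {A | A.PosSemidef} F) (hne : F.Nonempty) {v : Fin n → ℝ} :
    v ∈ hF.subspace hne ↔ vecMulVec v v ∈ F :=
  Iff.rfl

lemma exists_eq_sum_vecMulVec (hF : IsFace {A | A.PosSemidef} F)
    {X : Matrix (Fin n) (Fin n) ℝ} (hX : X ∈ F) : ∃ B : Matrix (Fin n) (Fin n) ℝ,
      X = ∑ k, vecMulVec (B k) (B k) ∧ ∀ k, vecMulVec (B k) (B k) ∈ F := by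
  obtain ⟨B, rfl⟩ := (hF.1 hX : X.PosSemidef).exists_eq_sum_vecMulVec
  exact ⟨B, rfl, fun k => hF.mem_of_sum_mem
    (fun k _ => posSemidef_vecMulVec_self_star (B k)) hX k (Finset.mem_univ k)⟩

lemma subset_of_subspace_le (hF : IsFace {A | A.PosSemidef} F)
    (hG : IsFace {A | A.PosSemidef} G) (hneF : F.Nonempty) (hneG : G.Nonempty)
    (hle : hG.subspace hneG ≤ hF.subspace hneF) : G ⊆ F := by
  intro X hX
  obtain ⟨B, rfl, hB⟩ := hG.exists_eq_sum_vecMulVec hX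
  exact hF.sum_mem hneF fun k _ => hle (hB k)

lemma subspace_lt_of_ssubset (hF : IsFace {A | A.PosSemidef} F)
    (hG : IsFace {A | A.PosSemidef} G) (hneF : F.Nonempty) (hneG : G.Nonempty) (hFG : F ⊂ G) :
    hF.subspace hneF < hG.subspace hneG :=
  lt_of_le_not_ge (fun _ hv => hFG.1 hv) fun hle =>
    hFG.2 (hF.subset_of_subspace_le hG hneF hneG hle)

lemma isPolyhedralCone_of_finrank_subspace_le_one (hF : IsFace {A | A.PosSemidef} F)
    (hne : F.Nonempty) (hd : Module.finrank ℝ (hF.subspace hne) ≤ 1) : IsPolyhedralCone F := by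
  obtain ⟨v, hv⟩ := ((Submodule.finrank_le_one_iff_isPrincipal _).mp hd).principal
  have hspan (w : Fin n → ℝ) : vecMulVec w w ∈ F ↔ ∃ c : ℝ, c • v = w := by
    rw [← hF.mem_subspace hne, hv, Submodule.mem_span_singleton]
  suffices F = (· • vecMulVec v v) '' Set.Ici (0 : ℝ) from this ▸ isPolyhedralCone_ray _
  ext X
  constructor
  · intro hX
    obtain ⟨B, rfl, hB⟩ := hF.exists_eq_sum_vecMulVec hX
    choose c hc using fun k => (hspan (B k)).mp (hB k)
    refine ⟨∑ k, c k * c k, Set.mem_Ici.mpr (Finset.sum_nonneg fun k _ => mul_self_nonneg _), ?_⟩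
    simp only [Finset.sum_smul, ← hc]
    refine Finset.sum_congr rfl fun k _ => ?_
    ext i j
    simp only [vecMulVec_apply, Matrix.smul_apply, Pi.smul_apply, smul_eq_mul]
    ring
  · rintro ⟨c, hc, rfl⟩
    exact hF.2.2.1 _ ((hspan v).mpr ⟨1, one_smul ℝ v⟩) c hc

end IsFace

/-- The face `{X ⪰ 0 | range X ⊆ Wᗮ}`. -/
def kernelFace {n : ℕ} (W : Set (Fin n → ℝ)) : Set (Matrix (Fin n) (Fin n) ℝ) :=
  {X | X.PosSemidef ∧ ∀ w ∈ W, X *ᵥ w = 0}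

lemma isFace_kernelFace {n : ℕ} (W : Set (Fin n → ℝ)) :
    IsFace {A | A.PosSemidef} (kernelFace W) := by
  refine ⟨fun X hX => hX.1, ?_, ?_, ?_⟩
  · rintro X ⟨hX, hXW⟩ Y ⟨hY, hYW⟩ a b ha hb -
    refine ⟨(hX.smul ha).add (hY.smul hb), fun w hw => ?_⟩
    simp [add_mulVec, smul_mulVec, hXW w hw, hYW w hw]
  · rintro X ⟨hX, hXW⟩ t ht
    exact ⟨hX.smul ht, fun w hw => by simp [smul_mulVec, hXW w hw]⟩
  · rintro X (hX : X.PosSemidef) Y (hY : Y.PosSemidef) ⟨-, hXYW⟩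
    have hform (w) (hw : w ∈ W) : star w ⬝ᵥ X *ᵥ w = 0 ∧ star w ⬝ᵥ Y *ᵥ w = 0 := by
      have h := congrArg (star w ⬝ᵥ ·) (hXYW w hw)
      simp only [add_mulVec, dotProduct_add, dotProduct_zero] at h
      have := hX.dotProduct_mulVec_nonneg w
      have := hY.dotProduct_mulVec_nonneg w
      constructor <;> linarith
    exact ⟨⟨hX, fun w hw => (hX.dotProduct_mulVec_zero_iff w).mp (hform w hw).1⟩,
      ⟨hY, fun w hw => (hY.dotProduct_mulVec_zero_iff w).mp (hform w hw).2⟩⟩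

lemma kernelFace_nonempty {n : ℕ} (W : Set (Fin n → ℝ)) : (kernelFace W).Nonempty :=
  ⟨0, PosSemidef.zero, fun w _ => zero_mulVec w⟩

lemma kernelFace_anti {n : ℕ} {W W' : Set (Fin n → ℝ)} (h : W ⊆ W') :
    kernelFace W' ⊆ kernelFace W :=
  fun _ hX => ⟨hX.1, fun w hw => hX.2 w (h hw)⟩

lemma vecMulVec_self_mem_kernelFace_iff {n : ℕ} {W : Set (Fin n → ℝ)} {p : Fin n → ℝ} :
    vecMulVec p p ∈ kernelFace W ↔ ∀ w ∈ W, p ⬝ᵥ w = 0 := by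
  simp only [kernelFace, Set.mem_ofPred_eq, vecMulVec_mulVec, op_smul_eq_smul, smul_eq_zero]
  refine ⟨fun h w hw => (h.2 w hw).elim id fun hp => by simp [hp], fun h => ?_⟩
  exact ⟨posSemidef_vecMulVec_self_star p, fun w hw => .inl (h w hw)⟩

def blockFace (n k : ℕ) : Set (Matrix (Fin n) (Fin n) ℝ) :=
  kernelFace ((fun j : Fin n => Pi.single j (1 : ℝ)) '' {j | k ≤ (j : ℕ)})

lemma vecMulVec_self_mem_blockFace_iff {n k : ℕ} {p : Fin n → ℝ} :
    vecMulVec p p ∈ blockFace n k ↔ ∀ j : Fin n, k ≤ (j : ℕ) → p j = 0 := by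
  simp [blockFace, vecMulVec_self_mem_kernelFace_iff]

lemma blockFace_ssubset {n k k' : ℕ} (hk : k < k') (hk' : k' ≤ n) :
    blockFace n k ⊂ blockFace n k' := by
  refine ⟨kernelFace_anti (Set.image_mono fun j (hj : k' ≤ (j : ℕ)) => hk.le.trans hj), ?_⟩
  intro hsub
  let e : Fin n → ℝ := Pi.single ⟨k, by omega⟩ 1
  have hmem : vecMulVec e e ∈ blockFace n k' := by
    rw [vecMulVec_self_mem_blockFace_iff]
    intro j hj
    simp [e, Pi.single_apply, Fin.ext_iff]
    omega
  have := vecMulVec_self_mem_blockFace_iff.mp (hsub hmem) ⟨k, by omega⟩ le_rfl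
  simp [e] at this

lemma isPolyhedralCone_blockFace_one {n : ℕ} (hn : 1 ≤ n) :
    IsPolyhedralCone (blockFace n 1) := by
  let e₀ : Fin n → ℝ := Pi.single ⟨0, hn⟩ 1
  have hF : IsFace {A | A.PosSemidef} (blockFace n 1) := isFace_kernelFace _
  have hne : (blockFace n 1).Nonempty := kernelFace_nonempty _
  have hle : hF.subspace hne ≤ ℝ ∙ e₀ := by
    intro v hv
    rw [IsFace.mem_subspace, vecMulVec_self_mem_blockFace_iff] at hv
    refine Submodule.mem_span_singleton.mpr ⟨v ⟨0, hn⟩, funext fun j => ?_⟩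
    rcases eq_or_ne (j : ℕ) 0 with h | h
    · obtain rfl : j = ⟨0, hn⟩ := Fin.ext h
      simp [e₀]
    · simp [e₀, Fin.ext_iff, h, hv j (by omega)]
  refine hF.isPolyhedralCone_of_finrank_subspace_le_one hne ?_
  exact ((Submodule.finrank_mono hle).trans (finrank_span_le_card _)).trans (by simp)

lemma not_isPolyhedralCone_blockFace {n k : ℕ} (hk : 2 ≤ k) (hkn : k ≤ n) :
    ¬ IsPolyhedralCone (blockFace n k) := by
  refine not_isPolyhedralCone_of_forall_vecMulVec_mem (fun X hX => hX.1)
    (u := Pi.single ⟨0, by omega⟩ 1) (v := Pi.single ⟨1, by omega⟩ 1) (by simp) (by simp)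
    (by simp [Fin.ext_iff]) fun t => ?_
  rw [vecMulVec_self_mem_blockFace_iff]
  intro j hj
  simp [Fin.ext_iff, show (j : ℕ) ≠ 0 by omega, show (j : ℕ) ≠ 1 by omega]

lemma isPolyChain_blockFace (n : ℕ) :
    IsPolyChain {A | A.PosSemidef} n fun i : Fin n => blockFace n (i + 1) := by
  refine ⟨⟨fun i j hij => blockFace_ssubset (by simpa using hij) j.isLt,
    fun i => ⟨isFace_kernelFace _, kernelFace_nonempty _⟩⟩, fun i hi => ?_, fun i hi => ?_⟩
  · dsimp only
    rw [hi]
    exact isPolyhedralCone_blockFace_one i.pos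
  · exact not_isPolyhedralCone_blockFace (by omega) i.isLt

theorem IsPolyChain.length_sub_one_le {n ℓ : ℕ} {F : Fin ℓ → Set (Matrix (Fin n) (Fin n) ℝ)}
    (hF : IsPolyChain {A | A.PosSemidef} ℓ F) : ℓ - 1 ≤ n - 1 := by
  obtain ⟨⟨hmono, hface⟩, -, hnonpoly⟩ := hF
  obtain _ | m := ℓ
  · simp
  let d (j : Fin m) : ℕ := Module.finrank ℝ ((hface j.succ).1.subspace (hface j.succ).2)
  have hd : StrictMono d := fun i j hij => Submodule.finrank_lt_finrank_of_lt <|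
    IsFace.subspace_lt_of_ssubset _ _ _ _ (hmono (Fin.succ_lt_succ_iff.mpr hij))
  have hrange (j : Fin m) : d j ∈ Finset.Icc 2 n := by
    refine Finset.mem_Icc.mpr ⟨?_, ?_⟩
    · by_contra! h
      exact hnonpoly j.succ j.succ_pos ((hface j.succ).1.isPolyhedralCone_of_finrank_subspace_le_one
        (hface j.succ).2 (Nat.le_of_lt_succ h))
    · simpa using Submodule.finrank_le ((hface j.succ).1.subspace (hface j.succ).2)
  have hcard := Finset.card_le_card_of_injOn (s := .univ) d (fun j _ => hrange j)
    hd.injective.injOn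
  simp only [Finset.card_univ, Fintype.card_fin, Nat.card_Icc] at hcard
  omega

/-- The distance to polyhedrality of the positive semidefinite cone `S^n_+` is `n − 1`:
the longest strictly ascending chain of nonempty faces starting with a polyhedral face
followed only by nonpolyhedral faces has length `n`. -/
theorem stmt12 {n : ℕ} (hn : 1 ≤ n) :
    (∃ F : Fin n → Set (Matrix (Fin n) (Fin n) ℝ),
        IsPolyChain {A | A.PosSemidef} n F) ∧
      ∀ ℓ (F : Fin ℓ → Set (Matrix (Fin n) (Fin n) ℝ)),
        IsPolyChain {A | A.PosSemidef} ℓ F → ℓ ≤ n :=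
  ⟨⟨_, isPolyChain_blockFace n⟩, fun _ _ hF => by have := hF.length_sub_one_le; omega⟩
end

section
/- The longest strictly ascending chain of nonempty faces of the doubly nonnegative cone D^n = S^n_+ ∩ N^n (positive semidefinite matrices with nonnegative entries) has length n(n+1)/2 + 1, which is the maximum possible for any closed convex cone contained in the space S^n of n×n symmetric matrices. -/
/-- The doubly nonnegative cone `D^n = S^n_+ ∩ N^n`. -/
def DoublyNonnegative (n : ℕ) : Set (Matrix (Fin n) (Fin n) ℝ) :=
  {A | A.PosSemidef} ∩ {A | ∀ i j, 0 ≤ A i j}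

/-!
A nonempty face `F` of a cone `K` satisfies `F = K ∩ span F`, so a strict inclusion of faces
is a strict inclusion of their spans, and the dimension of the span strictly increases along a
chain. Inside the symmetric matrices, whose entries are indexed by `Sym2 (Fin n)`, the
dimension is at most `n(n+1)/2`, which bounds the length by `n(n+1)/2 + 1`.

For `D^n` the bound is attained by the faces `{A ∈ D^n | A i j = 0 unless s(i, j) ∈ S}`: the
nonnegativity of the entries makes every such set a face. Enumerate the unordered pairs with
the diagonal ones first and let `S` run through the initial segments. Adding `s(i, j)` enlarges
the face strictly, as witnessed by `u uᵀ` with `u` the indicator of `{i, j}`, whose support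
`{s(i, i), s(i, j), s(j, j)}` has already been reached.
-/

open Matrix

variable {n : ℕ}

theorem IsFace.zero_mem_s14 {K F : Set (Matrix (Fin n) (Fin n) ℝ)} (hF : IsFace K F)
    (hne : F.Nonempty) : (0 : Matrix (Fin n) (Fin n) ℝ) ∈ F := by
  obtain ⟨x, hx⟩ := hne
  simpa using hF.2.2.1 x hx 0 le_rfl

theorem IsFace.add_mem_s14 {K F : Set (Matrix (Fin n) (Fin n) ℝ)} (hF : IsFace K F)
    {x y : Matrix (Fin n) (Fin n) ℝ} (hx : x ∈ F) (hy : y ∈ F) : x + y ∈ F := by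
  have hmid : (1 / 2 : ℝ) • x + (1 / 2 : ℝ) • y ∈ F :=
    hF.2.1 hx hy (by norm_num) (by norm_num) (by norm_num)
  convert hF.2.2.1 _ hmid 2 (by norm_num) using 1
  rw [smul_add, smul_smul, smul_smul]
  norm_num

theorem IsFace.exists_sub_of_mem_span {K F : Set (Matrix (Fin n) (Fin n) ℝ)} (hF : IsFace K F)
    (hne : F.Nonempty) {x : Matrix (Fin n) (Fin n) ℝ} (hx : x ∈ Submodule.span ℝ F) :
    ∃ u ∈ F, ∃ v ∈ F, x = u - v := by
  have h0 := hF.zero_mem_s14 hne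
  induction hx using Submodule.span_induction with
  | mem z hz => exact ⟨z, hz, 0, h0, (sub_zero z).symm⟩
  | zero => exact ⟨0, h0, 0, h0, (sub_zero 0).symm⟩
  | add a b _ _ iha ihb =>
    obtain ⟨u, hu, v, hv, rfl⟩ := iha
    obtain ⟨u', hu', v', hv', rfl⟩ := ihb
    exact ⟨u + u', hF.add_mem_s14 hu hu', v + v', hF.add_mem_s14 hv hv', by abel⟩
  | smul c a _ iha =>
    obtain ⟨u, hu, v, hv, rfl⟩ := iha
    rcases le_or_gt 0 c with hc | hc
    · exact ⟨c • u, hF.2.2.1 u hu c hc, c • v, hF.2.2.1 v hv c hc, smul_sub c u v⟩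
    · refine ⟨(-c) • v, hF.2.2.1 v hv (-c) (neg_nonneg.mpr hc.le), (-c) • u,
        hF.2.2.1 u hu (-c) (neg_nonneg.mpr hc.le), ?_⟩
      rw [smul_sub, neg_smul, neg_smul, neg_sub_neg]

theorem IsFace.eq_inter_span {K F : Set (Matrix (Fin n) (Fin n) ℝ)} (hF : IsFace K F)
    (hne : F.Nonempty) : F = K ∩ Submodule.span ℝ F := by
  refine Set.Subset.antisymm (fun x hx => ⟨hF.1 hx, Submodule.subset_span hx⟩) ?_
  rintro x ⟨hxK, hxF⟩
  obtain ⟨u, hu, v, hv, rfl⟩ := hF.exists_sub_of_mem_span hne hxF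
  exact (hF.2.2.2 _ hxK v (hF.1 hv) (by simpa using hu)).1

theorem card_sym2_fin (n : ℕ) : Fintype.card (Sym2 (Fin n)) = n * (n + 1) / 2 := by
  rw [Sym2.card, Fintype.card_fin, Nat.choose_two_right, Nat.add_sub_cancel, mul_comm]

theorem finrank_span_le_of_forall_isSymm {ι K : Type*} [Fintype ι] [Field K]
    {s : Set (Matrix ι ι K)} (hs : ∀ A ∈ s, A.IsSymm) :
    Module.finrank K (Submodule.span K s) ≤ Fintype.card (Sym2 ι) := by
  let ofSym2 : (Sym2 ι → K) →ₗ[K] Matrix ι ι K :=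
    { toFun f := Matrix.of fun i j => f s(i, j)
      map_add' _ _ := rfl
      map_smul' _ _ := rfl }
  have hle : Submodule.span K s ≤ LinearMap.range ofSym2 := Submodule.span_le.mpr fun A hA =>
    ⟨Sym2.lift ⟨fun i j => A i j, fun i j => (hs A hA).apply j i⟩, by ext i j; rfl⟩
  calc Module.finrank K (Submodule.span K s)
      _ ≤ Module.finrank K (LinearMap.range ofSym2) := Submodule.finrank_mono hle
      _ ≤ Module.finrank K (Sym2 ι → K) := LinearMap.finrank_range_le _
      _ = Fintype.card (Sym2 ι) := Module.finrank_fintype_fun_eq_card K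

theorem length_le_finrank_add_one_of_strictMono {K V : Type*} [Field K] [AddCommGroup V]
    [Module K V] {ℓ : ℕ} {M : Fin ℓ → Submodule K V} (hM : StrictMono M) (W : Submodule K V)
    [FiniteDimensional K W] (hMW : ∀ k, M k ≤ W) : ℓ ≤ Module.finrank K W + 1 := by
  have : ∀ k, FiniteDimensional K (M k) := fun k => Submodule.finiteDimensional_of_le (hMW k)
  let rank : Fin ℓ → Fin (Module.finrank K W + 1) := fun k =>
    ⟨Module.finrank K (M k), Nat.lt_succ_of_le (Submodule.finrank_mono (hMW k))⟩
  have hrank : StrictMono rank := fun a b hab => Submodule.finrank_lt_finrank_of_lt (hM hab)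
  simpa using Fintype.card_le_of_injective rank hrank.injective

theorem IsFaceChain.length_le {K : Set (Matrix (Fin n) (Fin n) ℝ)} (hK : K ⊆ {A | A.IsSymm})
    {ℓ : ℕ} {F : Fin ℓ → Set (Matrix (Fin n) (Fin n) ℝ)} (h : IsFaceChain K ℓ F) :
    ℓ ≤ n * (n + 1) / 2 + 1 := by
  have hspan : StrictMono fun k => Submodule.span ℝ (F k) := fun a b hab =>
    (Submodule.span_mono (h.1 hab).le).lt_of_ne fun he => (h.1 hab).ne <| by
      rw [(h.2 a).1.eq_inter_span (h.2 a).2, (h.2 b).1.eq_inter_span (h.2 b).2, he]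
  have hK : Module.finrank ℝ (Submodule.span ℝ K) ≤ n * (n + 1) / 2 :=
    card_sym2_fin n ▸ finrank_span_le_of_forall_isSymm hK
  have := length_le_finrank_add_one_of_strictMono hspan (Submodule.span ℝ K)
    fun k => Submodule.span_mono (h.2 k).1.1
  omega

theorem DoublyNonnegative.add_mem_s14 {A B : Matrix (Fin n) (Fin n) ℝ}
    (hA : A ∈ DoublyNonnegative n) (hB : B ∈ DoublyNonnegative n) :
    A + B ∈ DoublyNonnegative n :=
  ⟨hA.1.add hB.1, fun i j => add_nonneg (hA.2 i j) (hB.2 i j)⟩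

theorem DoublyNonnegative.smul_mem {A : Matrix (Fin n) (Fin n) ℝ}
    (hA : A ∈ DoublyNonnegative n) {t : ℝ} (ht : 0 ≤ t) : t • A ∈ DoublyNonnegative n :=
  ⟨hA.1.smul ht, fun i j => mul_nonneg ht (hA.2 i j)⟩

theorem DoublyNonnegative.subset_isSymm :
    DoublyNonnegative n ⊆ {A : Matrix (Fin n) (Fin n) ℝ | A.IsSymm} := fun A hA => by
  simpa [Matrix.conjTranspose_eq_transpose_of_trivial] using hA.1.1

def dnnSupportedOn (n : ℕ) (S : Set (Sym2 (Fin n))) : Set (Matrix (Fin n) (Fin n) ℝ) :=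
  {A | A ∈ DoublyNonnegative n ∧ ∀ i j, s(i, j) ∉ S → A i j = 0}

theorem isFace_dnnSupportedOn (S : Set (Sym2 (Fin n))) :
    IsFace (DoublyNonnegative n) (dnnSupportedOn n S) := by
  refine ⟨fun A hA => hA.1, ?_, ?_, ?_⟩
  · rintro A ⟨hA, hA0⟩ B ⟨hB, hB0⟩ a b ha hb -
    refine ⟨DoublyNonnegative.add_mem_s14 (DoublyNonnegative.smul_mem hA ha)
      (DoublyNonnegative.smul_mem hB hb), fun i j hij => ?_⟩
    simp [hA0 i j hij, hB0 i j hij]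
  · rintro A ⟨hA, hA0⟩ t ht
    exact ⟨DoublyNonnegative.smul_mem hA ht, fun i j hij => by simp [hA0 i j hij]⟩
  · rintro A hA B hB ⟨-, hAB0⟩
    have hzero (i j) (hij : s(i, j) ∉ S) : A i j = 0 ∧ B i j = 0 :=
      (add_eq_zero_iff_of_nonneg (hA.2 i j) (hB.2 i j)).mp (hAB0 i j hij)
    exact ⟨⟨hA, fun i j hij => (hzero i j hij).1⟩,
      ⟨hB, fun i j hij => (hzero i j hij).2⟩⟩

theorem zero_mem_dnnSupportedOn (S : Set (Sym2 (Fin n))) : 0 ∈ dnnSupportedOn n S :=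
  ⟨⟨Matrix.PosSemidef.zero, fun _ _ => le_rfl⟩, fun _ _ _ => rfl⟩

theorem dnnSupportedOn_mono {S T : Set (Sym2 (Fin n))} (hST : S ⊆ T) :
    dnnSupportedOn n S ⊆ dnnSupportedOn n T :=
  fun _ ⟨hA, hA0⟩ => ⟨hA, fun i j hij => hA0 i j (fun h => hij (hST h))⟩

theorem vecMulVec_indicator_mem_dnnSupportedOn {S : Set (Sym2 (Fin n))} {i j : Fin n}
    (hii : s(i, i) ∈ S) (hij : s(i, j) ∈ S) (hjj : s(j, j) ∈ S) :
    vecMulVec (Set.indicator {i, j} 1) (Set.indicator {i, j} 1) ∈ dnnSupportedOn n S := by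
  refine ⟨⟨?_, fun a b => ?_⟩, fun a b hab => ?_⟩
  · simpa using posSemidef_vecMulVec_self_star (Set.indicator {i, j} (1 : Fin n → ℝ))
  · rw [vecMulVec_apply]
    exact mul_nonneg (Set.indicator_nonneg (fun _ _ => zero_le_one) a)
      (Set.indicator_nonneg (fun _ _ => zero_le_one) b)
  · rw [vecMulVec_apply]
    by_contra hne
    have ha : a = i ∨ a = j := by
      simpa using Set.mem_of_indicator_ne_zero (left_ne_zero_of_mul hne)
    have hb : b = i ∨ b = j := by
      simpa using Set.mem_of_indicator_ne_zero (right_ne_zero_of_mul hne)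
    rcases ha with rfl | rfl <;> rcases hb with rfl | rfl <;> simp_all [Sym2.eq_swap]

theorem dnnSupportedOn_ssubset {S T : Set (Sym2 (Fin n))} (hST : S ⊆ T) {i j : Fin n}
    (hii : s(i, i) ∈ T) (hij : s(i, j) ∈ T \ S) (hjj : s(j, j) ∈ T) :
    dnnSupportedOn n S ⊂ dnnSupportedOn n T := by
  refine (Set.ssubset_iff_of_subset (dnnSupportedOn_mono hST)).mpr
    ⟨_, vecMulVec_indicator_mem_dnnSupportedOn hii hij.1 hjj, fun hW => ?_⟩
  simpa [vecMulVec_apply] using hW.2 i j hij.2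

theorem exists_equiv_fin_lt_of_not {α : Type*} [Fintype α] (p : α → Prop) [DecidablePred p]
    {m : ℕ} (hm : Fintype.card α = m) :
    ∃ e : α ≃ Fin m, ∀ a b, p a → ¬ p b → e a < e b := by
  have hcard : Fintype.card {a // p a} + Fintype.card {a // ¬ p a} = m := by
    rw [← Fintype.card_sum, Fintype.card_congr (Equiv.sumCompl p), hm]
  refine ⟨(Equiv.sumCompl p).symm.trans <| ((Fintype.equivFin _).sumCongr
    (Fintype.equivFin _)).trans <| finSumFinEquiv.trans (finCongr hcard), fun a b ha hb => ?_⟩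
  simpa [Equiv.sumCompl, ha, hb, Fin.lt_def] using Nat.lt_add_right _ (Fin.is_lt _)

theorem exists_faceChain_doublyNonnegative_of_equiv {m : ℕ} (e : Sym2 (Fin n) ≃ Fin m)
    (he : ∀ a b, a.IsDiag → ¬ b.IsDiag → e a < e b) :
    ∃ F : Fin (m + 1) → Set (Matrix (Fin n) (Fin n) ℝ),
      IsFaceChain (DoublyNonnegative n) (m + 1) F := by
  let S : Fin (m + 1) → Set (Sym2 (Fin n)) := fun k => {p | (e p : ℕ) < k}
  have hdiag {i j : Fin n} {k : Fin (m + 1)} (hij : s(i, j) ∈ S k) : s(i, i) ∈ S k := by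
    by_cases h : i = j
    · rwa [h] at hij ⊢
    · exact (Fin.lt_def.mp (he _ _ (Sym2.mk_isDiag_iff.mpr rfl)
        (Sym2.mk_isDiag_iff.not.mpr h))).trans hij
  refine ⟨fun k => dnnSupportedOn n (S k), fun k l hkl => ?_,
    fun k => ⟨isFace_dnnSupportedOn _, 0, zero_mem_dnnSupportedOn _⟩⟩
  have hk : (k : ℕ) < m := lt_of_lt_of_le hkl (Nat.le_of_lt_succ l.2)
  obtain ⟨⟨i, j⟩, hp⟩ := Quot.exists_rep (e.symm ⟨k, hk⟩)
  have hij : s(i, j) ∈ S l \ S k := by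
    change s(i, j) = _ at hp
    simp [S, hp, hkl]
  have hji : s(j, i) ∈ S l := by rw [Sym2.eq_swap]; exact hij.1
  exact dnnSupportedOn_ssubset (fun _ hp => lt_trans hp (Fin.lt_def.mp hkl))
    (hdiag hij.1) hij (hdiag hji)

/-- The longest strictly ascending chain of nonempty faces of the doubly nonnegative
cone `D^n` has length `n(n+1)/2 + 1`, the maximum possible for any closed convex cone
contained in the space `S^n` of symmetric matrices. -/
theorem stmt14 {n : ℕ} :
    (∃ F : Fin (n * (n + 1) / 2 + 1) → Set (Matrix (Fin n) (Fin n) ℝ),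
        IsFaceChain (DoublyNonnegative n) (n * (n + 1) / 2 + 1) F) ∧
      (∀ ℓ (F : Fin ℓ → Set (Matrix (Fin n) (Fin n) ℝ)),
        IsFaceChain (DoublyNonnegative n) ℓ F → ℓ ≤ n * (n + 1) / 2 + 1) ∧
      ∀ C : Set (Matrix (Fin n) (Fin n) ℝ),
        (IsClosed C ∧ Convex ℝ C ∧ ∀ x ∈ C, ∀ t : ℝ, 0 ≤ t → t • x ∈ C) →
        C ⊆ {A | A.IsSymm} →
        ∀ ℓ (F : Fin ℓ → Set (Matrix (Fin n) (Fin n) ℝ)),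
          IsFaceChain C ℓ F → ℓ ≤ n * (n + 1) / 2 + 1 := by
  obtain ⟨e, he⟩ := exists_equiv_fin_lt_of_not Sym2.IsDiag (card_sym2_fin n)
  exact ⟨exists_faceChain_doublyNonnegative_of_equiv e he,
    fun _ _ h => h.length_le DoublyNonnegative.subset_isSymm,
    fun _ _ hC _ _ h => h.length_le hC⟩
end
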